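/- Let I be a monomial ideal of E with linear quotients and decomposition function g. For monomials u, v ∈ E with supp(u) ∩ supp(v) = ∅ and u ∈ M(I), one has g(u·v) = g(u) if and only if set(g(u)) ∩ supp(v) = ∅. -/

import Mathlib

/-!
Monomial ideals of `E` behave as in a polynomial ring: `e_ν ∈ (e_σ : σ ∈ A)` iff some `σ ⊆ ν`.
Indeed the algebra map killing the `e_i` with `i ∉ ν` annihilates every other generator and fixes
`e_ν`, which is nonzero since it is a basis vector of `⋀^|ν|`. So `g(u) = u_j` says that `j` is
the least index with `supp u_j ⊆ supp u`, and `k ∉ supp u_j` lies in `set(u_j)` iff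
`supp u_i ⊆ supp u_j ∪ {k}` for some `i < j`.

If `k ∈ set(g(u)) ∩ supp v`, this `u_i` divides `uv`, so `g(uv) ≠ g(u)`. Conversely, if
`g(uv) = u_{j'}` with `j' < j`, then `uv / u_j` lies in the colon ideal of `u_j`; linear quotients
give a variable `e_k` of it in `set(u_j)`, and `k ∉ supp v` forces `k ∈ supp u`, so an earlier
generator already divides `u`.
-/

open ExteriorAlgebra

/-- The `i`-th basis monomial `e_i` of the exterior algebra `E = K⟨e_1,…,e_n⟩`. -/
noncomputable def e (K : Type) [Field K] {n : ℕ} (i : Fin n) :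
    ExteriorAlgebra K (Fin n → K) :=
  ι K (Pi.single i 1)

/-- The monomial `e_μ = e_{i_1} ∧ ⋯ ∧ e_{i_d}` for `μ = {i_1 < ⋯ < i_d}`. -/
noncomputable def eMon (K : Type) [Field K] {n : ℕ} (μ : Finset (Fin n)) :
    ExteriorAlgebra K (Fin n → K) :=
  ((μ.sort (· ≤ ·)).map (e K)).prod

/-- The ideal `(u_1, …, u_j)` generated by the monomials `u_i = e_{μ_i}`, `i ≤ j`. -/
noncomputable def Iupto (K : Type) [Field K] {n r : ℕ}
    (μs : Fin r → Finset (Fin n)) (j : Fin r) :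
    Ideal (ExteriorAlgebra K (Fin n → K)) :=
  Ideal.span {v | ∃ i, i ≤ j ∧ v = eMon K (μs i)}

/-- The ideal `(u_1, …, u_{j-1})` generated by the monomials `u_i = e_{μ_i}`, `i < j`. -/
noncomputable def Ibelow (K : Type) [Field K] {n r : ℕ}
    (μs : Fin r → Finset (Fin n)) (j : Fin r) :
    Ideal (ExteriorAlgebra K (Fin n → K)) :=
  Ideal.span {v | ∃ i, i < j ∧ v = eMon K (μs i)}

/-- `set(u_j) = {k : e_k ∈ (u_1,…,u_{j-1}) : (u_j)}`. -/
noncomputable def setIdx (K : Type) [Field K] {n r : ℕ}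
    (μs : Fin r → Finset (Fin n)) (j : Fin r) : Set (Fin n) :=
  {k | e K k * eMon K (μs j) ∈ Ibelow K μs j}

/-- The monomial ideal generated by `u_1, …, u_r` has linear quotients with
respect to this order: each colon ideal `(u_1,…,u_{j-1}) : (u_j)` is generated
by a subset of the variables `e_1, …, e_n`. -/
def LinearQuotients (K : Type) [Field K] {n r : ℕ}
    (μs : Fin r → Finset (Fin n)) : Prop :=
  ∀ j : Fin r, ∃ S : Finset (Fin n),
    {f : ExteriorAlgebra K (Fin n → K) | f * eMon K (μs j) ∈ Ibelow K μs j}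
      = (Ideal.span {v | ∃ k ∈ S, v = e K k} : Set (ExteriorAlgebra K (Fin n → K)))

/-- `g(e_ν) = u_j`: `j` is the least index with `e_ν ∈ (u_1, …, u_j)`. -/
noncomputable def IsDecomp (K : Type) [Field K] {n r : ℕ}
    (μs : Fin r → Finset (Fin n)) (ν : Finset (Fin n)) (j : Fin r) : Prop :=
  eMon K ν ∈ Iupto K μs j ∧ ∀ i, i < j → eMon K ν ∉ Iupto K μs i

open Finset

section Monomials

variable {K : Type} [Field K] {n : ℕ}

lemma e_eq_eMon_singleton (k : Fin n) : e K k = eMon K {k} := by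
  simp [eMon]

lemma eMon_eq_ιMulti_family {k : ℕ} (σ : Set.powersetCard (Fin n) k) :
    eMon K σ.val = ExteriorAlgebra.ιMulti_family K k (Pi.basisFun K (Fin n)) σ := by
  rw [ExteriorAlgebra.ιMulti_family, ExteriorAlgebra.ιMulti_apply, List.ofFn_eq_map, eMon,
    Set.powersetCard.ofFinEmbEquiv_symm_apply, ← listMap_orderEmbOfFin_finRange σ.val σ.prop]
  simp [e, Function.comp_def]

lemma eMon_ne_zero (σ : Finset (Fin n)) : eMon K σ ≠ 0 := by
  let σ' : Set.powersetCard (Fin n) #σ := ⟨σ, Set.powersetCard.mem_iff.mpr rfl⟩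
  rw [show σ = σ'.val from rfl, eMon_eq_ιMulti_family]
  exact fun h => (exteriorPower.ιMulti_family_linearIndependent_ofBasis K _
    (Pi.basisFun K (Fin n))).ne_zero σ' (Subtype.ext h)

lemma eMon_mul_eMon_mem_iff (I : Ideal (ExteriorAlgebra K (Fin n → K)))
    {σ τ : Finset (Fin n)} (h : Disjoint σ τ) :
    eMon K σ * eMon K τ ∈ I ↔ eMon K (σ ∪ τ) ∈ I := by
  have hsign := ExteriorAlgebra.ιMulti_family_mul_of_disjoint K (Pi.basisFun K (Fin n))
    (⟨σ, Set.powersetCard.mem_iff.mpr rfl⟩ : Set.powersetCard _ #σ)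
    (⟨τ, Set.powersetCard.mem_iff.mpr rfl⟩ : Set.powersetCard _ #τ) h
  rw [← eMon_eq_ιMulti_family, ← eMon_eq_ιMulti_family, ← eMon_eq_ιMulti_family,
    Set.powersetCard.coe_disjUnion, disjUnion_eq_union] at hsign
  obtain ⟨u, hu⟩ : ∃ u : ℤˣ, eMon K σ * eMon K τ = u • eMon K (σ ∪ τ) := ⟨_, hsign⟩
  rcases Int.units_eq_one_or u with rfl | rfl <;> simp [hu]

variable (K) in
noncomputable def restrictTo (ν : Finset (Fin n)) :
    ExteriorAlgebra K (Fin n → K) →ₐ[K] ExteriorAlgebra K (Fin n → K) :=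
  ExteriorAlgebra.map <|
    (Pi.basisFun K (Fin n)).constr K fun i => if i ∈ ν then Pi.single i 1 else 0

lemma restrictTo_e (ν : Finset (Fin n)) (k : Fin n) :
    restrictTo K ν (e K k) = if k ∈ ν then e K k else 0 := by
  rw [restrictTo, e, ExteriorAlgebra.map_apply_ι, ← Pi.basisFun_apply, Module.Basis.constr_basis]
  split_ifs <;> simp

lemma restrictTo_eMon (ν σ : Finset (Fin n)) :
    restrictTo K ν (eMon K σ) = if σ ⊆ ν then eMon K σ else 0 := by
  rw [eMon, map_list_prod, List.map_map]
  split_ifs with h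
  · refine congrArg List.prod (List.map_congr_left fun k hk => ?_)
    simp [restrictTo_e, h ((mem_sort _).mp hk)]
  · obtain ⟨k, hkσ, hkν⟩ := not_subset.mp h
    exact List.prod_eq_zero <|
      List.mem_map.mpr ⟨k, (mem_sort _).mpr hkσ, by simp [restrictTo_e, hkν]⟩

theorem eMon_mem_span_iff {ι : Type*} (p : ι → Prop) (σ : ι → Finset (Fin n))
    (ν : Finset (Fin n)) :
    eMon K ν ∈ Ideal.span {v | ∃ i, p i ∧ v = eMon K (σ i)} ↔ ∃ i, p i ∧ σ i ⊆ ν := by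
  constructor
  · intro h
    by_contra! hν
    have hker : Ideal.span {v | ∃ i, p i ∧ v = eMon K (σ i)} ≤ RingHom.ker (restrictTo K ν) := by
      rw [Ideal.span_le]
      rintro _ ⟨i, hi, rfl⟩
      simp [restrictTo_eMon, hν i hi]
    have h0 := hker h
    rw [RingHom.mem_ker, restrictTo_eMon, if_pos subset_rfl] at h0
    exact eMon_ne_zero ν h0
  · rintro ⟨i, hi, hsub⟩
    rw [← sdiff_union_of_subset hsub, ← eMon_mul_eMon_mem_iff _ sdiff_disjoint]
    exact Ideal.mul_mem_left _ _ (Ideal.subset_span ⟨i, hi, rfl⟩)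

section LinearQuotients

variable {r : ℕ} {μs : Fin r → Finset (Fin n)}

lemma eMon_mem_Iupto_iff {j : Fin r} {ν : Finset (Fin n)} :
    eMon K ν ∈ Iupto K μs j ↔ ∃ i ≤ j, μs i ⊆ ν :=
  eMon_mem_span_iff _ _ _

lemma eMon_mem_Ibelow_iff {j : Fin r} {ν : Finset (Fin n)} :
    eMon K ν ∈ Ibelow K μs j ↔ ∃ i < j, μs i ⊆ ν :=
  eMon_mem_span_iff _ _ _

lemma isDecomp_iff {ν : Finset (Fin n)} {j : Fin r} :
    IsDecomp K μs ν j ↔ μs j ⊆ ν ∧ ∀ i < j, ¬ μs i ⊆ ν := by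
  simp only [IsDecomp, eMon_mem_Iupto_iff, not_exists, not_and]
  constructor
  · rintro ⟨⟨i, hij, hi⟩, hmin⟩
    have hmin' : ∀ i < j, ¬ μs i ⊆ ν := fun i hi => hmin i hi i le_rfl
    obtain rfl : i = j := hij.eq_of_not_lt fun hlt => hmin' i hlt hi
    exact ⟨hi, hmin'⟩
  · rintro ⟨hj, hmin⟩
    exact ⟨⟨j, le_rfl, hj⟩, fun i hi i' hi' => hmin i' (hi'.trans_lt hi)⟩

lemma mem_setIdx_iff {j : Fin r} {k : Fin n} (hk : k ∉ μs j) :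
    k ∈ setIdx K μs j ↔ ∃ i < j, μs i ⊆ insert k (μs j) := by
  rw [setIdx, Set.mem_ofPred_eq, e_eq_eMon_singleton,
    eMon_mul_eMon_mem_iff _ (disjoint_singleton_left.mpr hk), ← insert_eq, eMon_mem_Ibelow_iff]

/-- `e_τ` lies in the colon ideal, which is generated by variables, so one of them divides `e_τ`. -/
lemma LinearQuotients.exists_mem_setIdx (hlq : LinearQuotients K μs) {j : Fin r}
    {τ : Finset (Fin n)} (hτ : Disjoint τ (μs j)) (h : ∃ i < j, μs i ⊆ τ ∪ μs j) :
    ∃ k ∈ τ, k ∈ setIdx K μs j := by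
  obtain ⟨S, hS⟩ := hlq j
  have hcolon (f : ExteriorAlgebra K (Fin n → K)) :
      f * eMon K (μs j) ∈ Ibelow K μs j ↔ f ∈ Ideal.span {v | ∃ k ∈ S, v = e K k} :=
    Set.ext_iff.mp hS f
  have hvars : Ideal.span {v | ∃ k ∈ S, v = e K k} =
      Ideal.span {v | ∃ k, k ∈ S ∧ v = eMon K {k}} := by
    simp only [e_eq_eMon_singleton]
  rw [← eMon_mem_Ibelow_iff (K := K), ← eMon_mul_eMon_mem_iff _ hτ, hcolon, hvars,
    eMon_mem_span_iff] at h
  obtain ⟨k, hkS, hkτ⟩ := h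
  exact ⟨k, singleton_subset_iff.mp hkτ, (hcolon _).mpr (Ideal.subset_span ⟨k, hkS, rfl⟩)⟩

end LinearQuotients

end Monomials

/-- Let `I` have linear quotients with decomposition function `g`. For
monomials `u = e_ν ∈ M(I)` and `v = e_ρ` with `supp(u) ∩ supp(v) = ∅`, one has
`g(u·v) = g(u)` if and only if `set(g(u)) ∩ supp(v) = ∅`. Here `g(u) = u_j` and
`g(u·v) = u_{j'}` for the least indices `j`, `j'` with `e_ν ∈ (u_1,…,u_j)` and
`e_{ν∪ρ} ∈ (u_1,…,u_{j'})`. -/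
theorem stmt17 {K : Type} [Field K] {n r : ℕ} (μs : Fin r → Finset (Fin n))
    (hlq : LinearQuotients K μs)
    (ν ρ : Finset (Fin n)) (hdisj : ν ∩ ρ = ∅)
    (j j' : Fin r) (hj : IsDecomp K μs ν j) (hj' : IsDecomp K μs (ν ∪ ρ) j') :
    μs j' = μs j ↔ setIdx K μs j ∩ ↑ρ = ∅ := by
  obtain ⟨hjν, hjmin⟩ := isDecomp_iff.mp hj
  obtain ⟨hj'νρ, hj'min⟩ := isDecomp_iff.mp hj'
  have hjνρ : μs j ⊆ ν ∪ ρ := hjν.trans subset_union_left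
  have hj'j : j' ≤ j := not_lt.mp fun hlt => hj'min j hlt hjνρ
  have hμs : μs j' = μs j ↔ j' = j :=
    ⟨fun h => hj'j.antisymm (not_lt.mp fun hlt => hjmin j' hlt (h ▸ hjν)), congrArg μs⟩
  rw [hμs, Set.eq_empty_iff_forall_notMem]
  constructor
  · rintro rfl k ⟨hk, hkρ⟩
    have hkj : k ∉ μs j' := fun hkj =>
      disjoint_left.mp (disjoint_iff_inter_eq_empty.mpr hdisj) (hjν hkj) hkρ
    obtain ⟨i, hi, hsub⟩ := (mem_setIdx_iff hkj).mp hk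
    exact hj'min i hi (hsub.trans (insert_subset (mem_union_right _ hkρ) hjνρ))
  · intro hρ
    by_contra hne
    obtain ⟨k, hkτ, hk⟩ := hlq.exists_mem_setIdx (τ := (ν ∪ ρ) \ μs j) sdiff_disjoint
      ⟨j', hj'j.lt_of_ne hne, by rwa [sdiff_union_of_subset hjνρ]⟩
    obtain ⟨hkνρ, hkj⟩ := mem_sdiff.mp hkτ
    have hkν : k ∈ ν := (mem_union.mp hkνρ).resolve_right fun hkρ => hρ k ⟨hk, hkρ⟩
    obtain ⟨i, hi, hsub⟩ := (mem_setIdx_iff hkj).mp hk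
    exact hjmin i hi (hsub.trans (insert_subset hkν hjν))
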